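/- arXiv:1802.07381 — 3 statements merged into one kernel-verified Lean document; each statement's English description precedes it below -/
import Mathlib

section
/- Let (X_1, Y_1), ..., (X_ρ, Y_ρ) be mutually independent pairs of random variables, where for each i, X_i and Y_i are i.i.d. on a finite totally ordered set with min-entropy at least k. Then the statistical distance between the joint distribution (GT(X_1,Y_1), ..., GT(X_ρ,Y_ρ)) and the uniform distribution on {0,1}^ρ is at most ρ·2^{-(k+1)}. -/
open scoped Classical

lemma abs_mul_sub' (a b c d : ℝ) (ha : 0 ≤ a) (hd : 0 ≤ d) :
    |a * b - c * d| ≤ a * |b - d| + d * |a - c| := by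
  have h : a * b - c * d = a * (b - d) + d * (a - c) := by ring
  rw [h]
  calc |a * (b - d) + d * (a - c)| ≤ |a * (b - d)| + |d * (a - c)| := abs_add_le _ _
    _ = a * |b - d| + d * |a - c| := by
        rw [abs_mul, abs_mul, abs_of_nonneg ha, abs_of_nonneg hd]

lemma sd_prod_le (ρ : ℕ) (q : Fin ρ → ℝ) (h0 : ∀ i, 0 ≤ q i) (h1 : ∀ i, q i ≤ 1) :
    (1/2) * ∑ b : Fin ρ → Bool, |(∏ i, (if b i then q i else 1 - q i)) - (1/2:ℝ)^ρ|
    ≤ ∑ i, |q i - 1/2| := by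
  induction ρ with
  | zero => simp
  | succ n ih =>
    have key : ∑ b : Fin (n+1) → Bool,
        |(∏ i, (if b i then q i else 1 - q i)) - (1/2:ℝ)^(n+1)|
        ≤ (∑ b' : Fin n → Bool,
            |(∏ i, (if b' i then q i.succ else 1 - q i.succ)) - (1/2:ℝ)^n|)
          + 2 * |q 0 - 1/2| := by
      rw [← Equiv.sum_comp (Fin.consEquiv (fun _ : Fin (n+1) => Bool))]
      rw [Fintype.sum_prod_type]
      have step : ∀ (c : Bool) (b' : Fin n → Bool),
          |(∏ i, (if ((Fin.consEquiv (fun _ : Fin (n+1) => Bool)) (c, b')) i then q i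
              else 1 - q i)) - (1/2:ℝ)^(n+1)|
          ≤ (if c then q 0 else 1 - q 0) *
              |(∏ i, (if b' i then q i.succ else 1 - q i.succ)) - (1/2:ℝ)^n|
            + (1/2:ℝ)^n * |(if c then q 0 else 1 - q 0) - 1/2| := by
        intro c b'
        have hcons : (∏ i, (if ((Fin.consEquiv (fun _ : Fin (n+1) => Bool)) (c, b')) i then q i
              else 1 - q i))
            = (if c then q 0 else 1 - q 0) *
              ∏ i, (if b' i then q i.succ else 1 - q i.succ) := by
          rw [Fin.prod_univ_succ]
          simp
        have hbn : 0 ≤ (if c then q 0 else 1 - q 0) := by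
          cases c <;> simp <;> [linarith [h1 0]; exact h0 0]
        have hpow : (0:ℝ) ≤ (1/2:ℝ)^n := by positivity
        have h := abs_mul_sub' (if c then q 0 else 1 - q 0)
          (∏ i, (if b' i then q i.succ else 1 - q i.succ))
          (1/2) ((1/2:ℝ)^n) hbn hpow
        rw [hcons, show ((1:ℝ)/2)^(n+1) = (1/2) * (1/2:ℝ)^n from by ring]
        exact h
      calc ∑ c : Bool, ∑ b' : Fin n → Bool,
            |(∏ i, (if ((Fin.consEquiv (fun _ : Fin (n+1) => Bool)) (c, b')) i then q i
              else 1 - q i)) - (1/2:ℝ)^(n+1)|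
          ≤ ∑ c : Bool, ∑ b' : Fin n → Bool,
            ((if c then q 0 else 1 - q 0) *
              |(∏ i, (if b' i then q i.succ else 1 - q i.succ)) - (1/2:ℝ)^n|
            + (1/2:ℝ)^n * |(if c then q 0 else 1 - q 0) - 1/2|) := by
            apply Finset.sum_le_sum; intro c _
            apply Finset.sum_le_sum; intro b' _
            exact step c b'
        _ = (∑ b' : Fin n → Bool,
              |(∏ i, (if b' i then q i.succ else 1 - q i.succ)) - (1/2:ℝ)^n|)
            + 2 * |q 0 - 1/2| := by
            rw [Fintype.sum_bool]
            simp only [reduceIte, Bool.false_eq_true, if_false]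
            rw [Finset.sum_add_distrib, Finset.sum_add_distrib,
              Finset.sum_const, Finset.sum_const]
            simp only [← Finset.mul_sum]
            simp only [Finset.card_univ, Fintype.card_fun, Fintype.card_bool,
              Fintype.card_fin, nsmul_eq_mul]
            have hc : (((2:ℕ)^n : ℕ) : ℝ) * (1/2:ℝ)^n = 1 := by
              push_cast
              rw [← mul_pow]; norm_num
            have habs : |1 - q 0 - 1/2| = |q 0 - (1/2:ℝ)| := by
              rw [show (1 - q 0 - 1/2 : ℝ) = -(q 0 - 1/2) from by ring, abs_neg]
            rw [habs]
            linear_combination 2 * |q 0 - (1/2:ℝ)| * hc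
    have ihh := ih (fun i => q i.succ) (fun i => h0 i.succ) (fun i => h1 i.succ)
    rw [Fin.sum_univ_succ]
    linarith

lemma two_mul_q {α : Type*} [Fintype α] [LinearOrder α] (w : α → ℝ)
    (h1 : ∑ a, w a = 1) :
    2 * (∑ x, ∑ y, if y ≤ x then w x * w y else 0) = 1 + ∑ x, w x * w x := by
  have hswap : (∑ x, ∑ y, if y ≤ x then w x * w y else 0)
      = ∑ x, ∑ y, if x ≤ y then w x * w y else 0 := by
    rw [Finset.sum_comm]
    refine Finset.sum_congr rfl fun x _ => Finset.sum_congr rfl fun y _ => ?_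
    split <;> ring
  have expand : (∑ x, ∑ y, if y ≤ x then w x * w y else 0)
      + (∑ x, ∑ y, if x ≤ y then w x * w y else 0)
      = ∑ x, ∑ y, ((if y ≤ x then w x * w y else 0)
          + (if x ≤ y then w x * w y else 0)) := by
    rw [← Finset.sum_add_distrib]
    exact Finset.sum_congr rfl fun x _ => (Finset.sum_add_distrib).symm
  have point : ∀ x y : α, (if y ≤ x then w x * w y else 0)
      + (if x ≤ y then w x * w y else 0)
      = w x * w y + (if x = y then w x * w y else 0) := by
    intro x y
    rcases lt_trichotomy x y with h|h|h
    · rw [if_neg (not_le.2 h), if_pos h.le, if_neg h.ne]; ring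
    · subst h; simp
    · rw [if_pos h.le, if_neg (not_le.2 h), if_neg h.ne']
  have hsum1 : ∑ x, ∑ y, w x * w y = 1 := by
    have : ∀ x : α, ∑ y, w x * w y = w x := by
      intro x; rw [← Finset.mul_sum, h1, mul_one]
    simp only [this, h1]
  have hsum2 : ∀ x : α, (∑ y, if x = y then w x * w y else 0) = w x * w x := by
    intro x
    rw [Finset.sum_ite_eq]
    simp
  calc 2 * (∑ x, ∑ y, if y ≤ x then w x * w y else 0)
      = (∑ x, ∑ y, if y ≤ x then w x * w y else 0)
        + (∑ x, ∑ y, if x ≤ y then w x * w y else 0) := by rw [← hswap]; ring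
    _ = ∑ x, ∑ y, (w x * w y + (if x = y then w x * w y else 0)) := by
        rw [expand]
        exact Finset.sum_congr rfl fun x _ => Finset.sum_congr rfl fun y _ => point x y
    _ = (∑ x, ∑ y, w x * w y) + ∑ x, ∑ y, (if x = y then w x * w y else 0) := by
        rw [← Finset.sum_add_distrib]
        exact Finset.sum_congr rfl fun x _ => Finset.sum_add_distrib
    _ = 1 + ∑ x, w x * w x := by
        rw [hsum1]
        congr 1
        exact Finset.sum_congr rfl fun x _ => hsum2 x

/-- For mutually independent pairs (X_i, Y_i), i = 1..ρ, where in
each pair X_i and Y_i are i.i.d. on a finite totally ordered set with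
min-entropy at least k, the joint distribution of the bits GT(X_i, Y_i)
(which, by independence across pairs, is the product of the per-pair Bernoulli
distributions with success probability Pr[X_i ≥ Y_i]) has statistical distance
at most ρ·2^{-(k+1)} from the uniform distribution on {0,1}^ρ. -/
theorem gt_bits_close_to_uniform {α : Type*} [Fintype α] [LinearOrder α]
    (ρ k : ℕ) (p : Fin ρ → α → ℝ)
    (hp0 : ∀ i a, 0 ≤ p i a) (hp1 : ∀ i, ∑ a, p i a = 1)
    (hk : ∀ i a, p i a ≤ (2 : ℝ) ^ (-(k : ℝ))) :
    (1 / 2) * ∑ b : Fin ρ → Bool,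
        |(∏ i, (if b i then (∑ x, ∑ y, if y ≤ x then p i x * p i y else 0)
                else 1 - (∑ x, ∑ y, if y ≤ x then p i x * p i y else 0)))
          - (1 / 2) ^ ρ|
      ≤ (ρ : ℝ) * (2 : ℝ) ^ (-((k : ℝ) + 1)) := by
  set q : Fin ρ → ℝ := fun i => ∑ x, ∑ y, if y ≤ x then p i x * p i y else 0 with hq
  have hS0 : ∀ i, 0 ≤ ∑ x, p i x * p i x := fun i =>
    Finset.sum_nonneg fun x _ => mul_nonneg (hp0 i x) (hp0 i x)
  have hple1 : ∀ i x, p i x ≤ 1 := by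
    intro i x
    calc p i x ≤ ∑ a, p i a := Finset.single_le_sum (fun a _ => hp0 i a) (Finset.mem_univ x)
      _ = 1 := hp1 i
  have hS1 : ∀ i, ∑ x, p i x * p i x ≤ 1 := by
    intro i
    calc ∑ x, p i x * p i x ≤ ∑ x, p i x := by
          apply Finset.sum_le_sum
          intro x _
          nlinarith [hp0 i x, hple1 i x]
      _ = 1 := hp1 i
  have hSk : ∀ i, ∑ x, p i x * p i x ≤ (2:ℝ) ^ (-(k:ℝ)) := by
    intro i
    calc ∑ x, p i x * p i x ≤ ∑ x, (2:ℝ) ^ (-(k:ℝ)) * p i x := by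
          apply Finset.sum_le_sum
          intro x _
          exact mul_le_mul_of_nonneg_right (hk i x) (hp0 i x)
      _ = (2:ℝ) ^ (-(k:ℝ)) := by rw [← Finset.mul_sum, hp1 i, mul_one]
  have h2q : ∀ i, 2 * q i = 1 + ∑ x, p i x * p i x := fun i => two_mul_q (p i) (hp1 i)
  have h0q : ∀ i, 0 ≤ q i := by intro i; have := h2q i; have := hS0 i; linarith
  have h1q : ∀ i, q i ≤ 1 := by intro i; have := h2q i; have := hS1 i; linarith
  have hpow : (2:ℝ) ^ (-((k:ℝ)+1)) = (2:ℝ) ^ (-(k:ℝ)) / 2 := by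
    rw [show -((k:ℝ)+1) = -(k:ℝ) + (-1) from by ring,
      Real.rpow_add (by norm_num : (0:ℝ) < 2), Real.rpow_neg_one]
    ring
  have habs : ∀ i, |q i - 1/2| ≤ (2:ℝ) ^ (-((k:ℝ)+1)) := by
    intro i
    rw [hpow]
    have h2 := h2q i
    have hs0 := hS0 i
    have hsk := hSk i
    rw [abs_of_nonneg (by linarith)]
    linarith
  calc (1 / 2) * ∑ b : Fin ρ → Bool,
        |(∏ i, (if b i then q i else 1 - q i)) - (1/2:ℝ) ^ ρ|
      ≤ ∑ i, |q i - 1/2| := sd_prod_le ρ q h0q h1q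
    _ ≤ ∑ _i : Fin ρ, (2:ℝ) ^ (-((k:ℝ)+1)) := Finset.sum_le_sum fun i _ => habs i
    _ = (ρ : ℝ) * (2 : ℝ) ^ (-((k : ℝ) + 1)) := by
        rw [Finset.sum_const, Finset.card_univ, Fintype.card_fin, nsmul_eq_mul]
end

section
/- For a pairwise independent family of hash functions H mapping {0,1}^n to {0,1}^m, the function Ext(h, x) = h(x) is a strong seeded extractor: for any random variable X on {0,1}^n with min-entropy at least k, the statistical distance between (H, H(X)) and (H, U_m), where H is uniform on the family and U_m uniform on {0,1}^m and independent of H, is at most (1/2)·√(2^{m-k}). -/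
open scoped Classical

/-- Leftover Hash Lemma, strong form: For a pairwise
independent family (h_i)_{i : ι} of hash functions {0,1}^n → {0,1}^m and any
source X on {0,1}^n with min-entropy at least k, the joint distribution of
(H, H(X)) — H uniform on ι — is within statistical distance
(1/2)·√(2^{m-k}) of (H, U_m). -/
theorem leftover_hash_lemma (n m : ℕ) {ι : Type*} [Fintype ι] [Nonempty ι]
    (h : ι → (Fin n → Bool) → (Fin m → Bool)) (k : ℝ)
    (hpair : ∀ x x' : Fin n → Bool, x ≠ x' → ∀ y y' : Fin m → Bool,
      ((Finset.univ.filter (fun i => h i x = y ∧ h i x' = y')).card : ℝ)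
        / (Fintype.card ι : ℝ) = (2 : ℝ) ^ (-(2 * (m : ℝ))))
    (p : (Fin n → Bool) → ℝ)
    (hp0 : ∀ x, 0 ≤ p x) (hp1 : ∑ x, p x = 1)
    (hk : ∀ x, p x ≤ (2 : ℝ) ^ (-k)) :
    (1 / 2) * ∑ i : ι, ∑ y : Fin m → Bool,
        |(1 / (Fintype.card ι : ℝ)) * (∑ x, if h i x = y then p x else 0)
          - (1 / (Fintype.card ι : ℝ)) * (2 : ℝ) ^ (-(m : ℝ))|
      ≤ (1 / 2) * Real.sqrt ((2 : ℝ) ^ ((m : ℝ) - k)) := by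
  classical
  set N : ℝ := (Fintype.card ι : ℝ) with hNdef
  have hNpos : (0:ℝ) < N := by
    have : 0 < Fintype.card ι := Fintype.card_pos
    rw [hNdef]
    exact_mod_cast this
  set c : ℝ := (2:ℝ) ^ (-(m:ℝ)) with hcdef
  set q : ι → (Fin m → Bool) → ℝ := fun i y => ∑ x, if h i x = y then p x else 0
    with hqdef
  have hMnat : (Fintype.card (Fin m → Bool)) = 2 ^ m := by
    simp [Fintype.card_fun]
  have hM : ((Fintype.card (Fin m → Bool) : ℕ) : ℝ) = (2:ℝ) ^ (m:ℝ) := by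
    rw [hMnat]
    push_cast
    rw [← Real.rpow_natCast 2 m]
  -- sum of q over y is 1
  have hsumq : ∀ i, ∑ y, q i y = 1 := by
    intro i
    rw [hqdef]
    rw [Finset.sum_comm]
    simp only [Finset.sum_ite_eq, Finset.mem_univ, if_true]
    exact hp1
  -- collision sum over y
  have hcoll : ∀ (i : ι) (x x' : Fin n → Bool),
      ∑ y, (if h i x = y then p x else 0) * (if h i x' = y then p x' else 0)
        = if h i x' = h i x then p x * p x' else 0 := by
    intro i x x'
    simp [ite_mul, zero_mul, Finset.sum_ite_eq, eq_comm]
  -- off-diagonal count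
  have hoff : ∀ x x' : Fin n → Bool, x ≠ x' →
      ∑ i : ι, (if h i x' = h i x then (1:ℝ) else 0) = N * (2:ℝ) ^ (-(m:ℝ)) := by
    intro x x' hne
    have step1 : ∀ i : ι, (if h i x' = h i x then (1:ℝ) else 0)
        = ∑ y, (if h i x = y ∧ h i x' = y then (1:ℝ) else 0) := by
      intro i
      simp [ite_and, Finset.sum_ite_eq]
    calc ∑ i : ι, (if h i x' = h i x then (1:ℝ) else 0)
        = ∑ i : ι, ∑ y, (if h i x = y ∧ h i x' = y then (1:ℝ) else 0) := by
          exact Finset.sum_congr rfl fun i _ => step1 i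
      _ = ∑ y, ∑ i : ι, (if h i x = y ∧ h i x' = y then (1:ℝ) else 0) :=
          Finset.sum_comm
      _ = ∑ y : Fin m → Bool, N * (2:ℝ) ^ (-(2 * (m:ℝ))) := by
          refine Finset.sum_congr rfl fun y _ => ?_
          rw [Finset.sum_boole]
          have := hpair x x' hne y y
          field_simp at this ⊢
          linarith [this]
      _ = N * (2:ℝ) ^ (-(m:ℝ)) := by
          rw [Finset.sum_const, Finset.card_univ, nsmul_eq_mul, hM]
          rw [← mul_assoc, mul_comm ((2:ℝ) ^ (m:ℝ)) N, mul_assoc]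
          congr 1
          rw [← Real.rpow_add two_pos]
          ring_nf
  -- the key second-moment bound
  have hT : ∑ i : ι, ∑ y, (q i y)^2 ≤ N * (2:ℝ)^(-k) + N * (2:ℝ)^(-(m:ℝ)) := by
    have expand : ∀ i, ∑ y, (q i y)^2
        = ∑ x, ∑ x', (if h i x' = h i x then p x * p x' else 0) := by
      intro i
      have : ∀ y, (q i y)^2 = ∑ x, ∑ x',
          (if h i x = y then p x else 0) * (if h i x' = y then p x' else 0) := by
        intro y
        rw [hqdef, sq, Finset.sum_mul_sum]
      simp_rw [this]
      rw [Finset.sum_comm]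
      refine Finset.sum_congr rfl fun x _ => ?_
      rw [Finset.sum_comm]
      exact Finset.sum_congr rfl fun x' _ => hcoll i x x'
    have swap : ∑ i : ι, ∑ y, (q i y)^2
        = ∑ x, ∑ x', (p x * p x') * ∑ i : ι, (if h i x' = h i x then (1:ℝ) else 0) := by
      simp_rw [expand]
      rw [Finset.sum_comm]
      refine Finset.sum_congr rfl fun x _ => ?_
      rw [Finset.sum_comm]
      refine Finset.sum_congr rfl fun x' _ => ?_
      rw [Finset.mul_sum]
      refine Finset.sum_congr rfl fun i _ => ?_
      by_cases hxy : h i x' = h i x <;> simp [hxy]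
    rw [swap]
    -- split diagonal
    have diag_split : ∀ x : Fin n → Bool,
        ∑ x', (p x * p x') * ∑ i : ι, (if h i x' = h i x then (1:ℝ) else 0)
          ≤ N * (p x)^2 + N * (2:ℝ)^(-(m:ℝ)) * (p x * ∑ x', p x') := by
      intro x
      rw [← Finset.add_sum_erase _ _ (Finset.mem_univ x)]
      have hdiag : (p x * p x) * ∑ i : ι, (if h i x = h i x then (1:ℝ) else 0)
          = N * (p x)^2 := by
        simp [Finset.card_univ, sq, mul_comm]
        exact Or.inl hNdef.symm
      rw [hdiag]
      gcongr
      calc ∑ x' ∈ Finset.univ.erase x,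
            (p x * p x') * ∑ i : ι, (if h i x' = h i x then (1:ℝ) else 0)
          = ∑ x' ∈ Finset.univ.erase x, (p x * p x') * (N * (2:ℝ)^(-(m:ℝ))) := by
            refine Finset.sum_congr rfl fun x' hx' => ?_
            rw [hoff x x' (Ne.symm (Finset.ne_of_mem_erase hx'))]
        _ ≤ ∑ x', (p x * p x') * (N * (2:ℝ)^(-(m:ℝ))) := by
            refine Finset.sum_le_sum_of_subset_of_nonneg (Finset.erase_subset _ _) ?_
            intro x' _ _
            have := hp0 x
            have := hp0 x'
            positivity
        _ = N * (2:ℝ)^(-(m:ℝ)) * (p x * ∑ x', p x') := by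
            rw [Finset.mul_sum, Finset.mul_sum]
            refine Finset.sum_congr rfl fun x' _ => ?_
            ring
    calc ∑ x, ∑ x', (p x * p x') * ∑ i : ι, (if h i x' = h i x then (1:ℝ) else 0)
        ≤ ∑ x, (N * (p x)^2 + N * (2:ℝ)^(-(m:ℝ)) * (p x * ∑ x', p x')) :=
          Finset.sum_le_sum fun x _ => diag_split x
      _ = N * ∑ x, (p x)^2 + N * (2:ℝ)^(-(m:ℝ)) := by
          rw [Finset.sum_add_distrib, ← Finset.mul_sum, ← Finset.mul_sum, hp1]
          simp [hp1]
      _ ≤ N * (2:ℝ)^(-k) + N * (2:ℝ)^(-(m:ℝ)) := by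
          gcongr
          calc ∑ x, (p x)^2 ≤ ∑ x, (2:ℝ)^(-k) * p x := by
                refine Finset.sum_le_sum fun x _ => ?_
                rw [sq]
                exact mul_le_mul_of_nonneg_right (hk x) (hp0 x)
            _ = (2:ℝ)^(-k) := by rw [← Finset.mul_sum, hp1, mul_one]
    -- done hT
  -- variance bound
  have hV : ∑ i : ι, ∑ y, (q i y - c)^2 ≤ N * (2:ℝ)^(-k) := by
    have expand : ∀ i, ∑ y, (q i y - c)^2
        = (∑ y, (q i y)^2) - 2 * c * (∑ y, q i y) + (2:ℝ)^(m:ℝ) * c^2 := by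
      intro i
      have : ∀ y, (q i y - c)^2 = (q i y)^2 - 2 * c * q i y + c^2 := by
        intro y; ring
      simp_rw [this]
      rw [Finset.sum_add_distrib, Finset.sum_sub_distrib, ← Finset.mul_sum,
        Finset.sum_const, Finset.card_univ, nsmul_eq_mul, hM]
    have hc2 : (2:ℝ)^(m:ℝ) * c^2 = c := by
      rw [hcdef, sq, ← mul_assoc, ← Real.rpow_add two_pos, ← Real.rpow_add two_pos]
      ring_nf
    calc ∑ i : ι, ∑ y, (q i y - c)^2
        = ∑ i : ι, ((∑ y, (q i y)^2) - 2 * c * 1 + c) := by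
          refine Finset.sum_congr rfl fun i _ => ?_
          rw [expand i, hsumq i, hc2]
      _ = (∑ i : ι, ∑ y, (q i y)^2) - N * c := by
          rw [Finset.sum_add_distrib, Finset.sum_sub_distrib, Finset.sum_const,
            Finset.sum_const, Finset.card_univ, nsmul_eq_mul, nsmul_eq_mul]
          ring
      _ ≤ (N * (2:ℝ)^(-k) + N * c) - N * c := by
          have h2 := hT
          rw [hcdef] at *
          linarith
      _ = N * (2:ℝ)^(-k) := by ring
  -- Cauchy–Schwarz
  set S : ℝ := ∑ i : ι, ∑ y, |q i y - c| with hSdef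
  have hS0 : 0 ≤ S := by
    rw [hSdef]
    refine Finset.sum_nonneg fun i _ => Finset.sum_nonneg fun y _ => abs_nonneg _
  have hCS : S^2 ≤ (N * (2:ℝ)^(m:ℝ)) * ∑ i : ι, ∑ y, (q i y - c)^2 := by
    have hprod : S = ∑ z : ι × (Fin m → Bool), |q z.1 z.2 - c| := by
      rw [hSdef, ← Finset.univ_product_univ, Finset.sum_product]
    have hprod2 : ∑ i : ι, ∑ y, (q i y - c)^2
        = ∑ z : ι × (Fin m → Bool), |q z.1 z.2 - c|^2 := by
      rw [← Finset.univ_product_univ, Finset.sum_product]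
      simp [sq_abs]
    rw [hprod, hprod2]
    have := sq_sum_le_card_mul_sum_sq
      (s := (Finset.univ : Finset (ι × (Fin m → Bool))))
      (f := fun z => |q z.1 z.2 - c|)
    refine le_trans this ?_
    have hcard : ((Finset.univ : Finset (ι × (Fin m → Bool))).card : ℝ)
        = N * (2:ℝ)^(m:ℝ) := by
      rw [Finset.card_univ, Fintype.card_prod]
      push_cast
      rw [hM]
    rw [hcard]
  have hSbound : S^2 ≤ N^2 * (2:ℝ)^((m:ℝ) - k) := by
    calc S^2 ≤ (N * (2:ℝ)^(m:ℝ)) * ∑ i : ι, ∑ y, (q i y - c)^2 := hCS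
      _ ≤ (N * (2:ℝ)^(m:ℝ)) * (N * (2:ℝ)^(-k)) := by
          have hNM : 0 ≤ N * (2:ℝ)^(m:ℝ) := by positivity
          exact mul_le_mul_of_nonneg_left hV hNM
      _ = N^2 * ((2:ℝ)^(m:ℝ) * (2:ℝ)^(-k)) := by ring
      _ = N^2 * (2:ℝ)^((m:ℝ) - k) := by
          rw [← Real.rpow_add two_pos]; ring_nf
  have hSle : S ≤ N * Real.sqrt ((2:ℝ)^((m:ℝ) - k)) := by
    have h1 : S = Real.sqrt (S^2) := (Real.sqrt_sq hS0).symm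
    rw [h1]
    calc Real.sqrt (S^2) ≤ Real.sqrt (N^2 * (2:ℝ)^((m:ℝ) - k)) :=
          Real.sqrt_le_sqrt hSbound
      _ = N * Real.sqrt ((2:ℝ)^((m:ℝ) - k)) := by
          rw [Real.sqrt_mul (sq_nonneg N), Real.sqrt_sq hNpos.le]
  -- conclude
  have hLHS : ∑ i : ι, ∑ y : Fin m → Bool,
      |(1 / N) * (∑ x, if h i x = y then p x else 0) - (1 / N) * (2:ℝ)^(-(m:ℝ))|
        = (1 / N) * S := by
    rw [hSdef, Finset.mul_sum]
    refine Finset.sum_congr rfl fun i _ => ?_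
    rw [Finset.mul_sum]
    refine Finset.sum_congr rfl fun y _ => ?_
    rw [← mul_sub, abs_mul, abs_of_nonneg (by positivity : (0:ℝ) ≤ 1 / N)]
  rw [hLHS]
  have : (1 / N) * S ≤ Real.sqrt ((2:ℝ)^((m:ℝ) - k)) := by
    rw [div_mul_eq_mul_div, one_mul, div_le_iff₀ hNpos]
    rw [mul_comm] at hSle
    exact hSle
  linarith
end

section
/- No bit-fixing-robust multi-round extraction from Santha-Vazirani sources: for any function g : {0,1}^n → {0,1} and any δ ∈ (0, 1/2), there exists a δ-Santha-Vazirani source X on {0,1}^n such that either Pr[g(X) = 1] ≥ 1 - δ or Pr[g(X) = 1] ≤ δ. -/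
/-!
Induct on `n` with a stronger invariant: for every predicate `S` there are δ-SV sources `p`, `q`
and a weight `c ∈ [δ, 1 - δ]` with `c · Pr_p[S] + (1 - c) · Pr_q[¬S] ≤ δ`; equivalently, some
δ-SV source on `n + 1` bits has a first bit that predicts `S` of the remaining bits with error at
most `δ`. For `n = 0` take `c = δ` or `c = 1 - δ`. For `S` on `n + 1` bits, average the
invariants of the restrictions `S (0, ·)` and `S (1, ·)` with weight `1/2` each: the average is
again of the required form, with `c = (c₀ + c₁)/2` and with sources whose first bit is `1` with
probability `c₁/(c₀ + c₁)` resp. `(1 - c₁)/((1 - c₀) + (1 - c₁))`, both in `[δ, 1 - δ]`.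
Finally, if `Pr_p[S] > δ` the invariant forces `Pr_q[¬S] < δ`.
-/

open Finset

section Mass

variable {α : Type*} [Fintype α]

def mass (p : α → ℝ) (S : α → Prop) [DecidablePred S] : ℝ :=
  ∑ x, if S x then p x else 0

variable (p : α → ℝ)

theorem mass_congr {S T : α → Prop} [DecidablePred S] [DecidablePred T] (h : ∀ x, S x ↔ T x) :
    mass p S = mass p T := by
  simp only [mass, h]

theorem mass_true : mass p (fun _ => True) = ∑ x, p x := by
  simp [mass]

theorem mass_false : mass p (fun _ => False) = 0 := by
  simp [mass]

theorem mass_add_mass_not (S : α → Prop) [DecidablePred S] :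
    mass p S + mass p (fun x => ¬S x) = ∑ x, p x := by
  rw [mass, mass, ← sum_add_distrib]
  exact sum_congr rfl fun x _ => by split_ifs <;> simp

end Mass

/-- Conditional bit probabilities are stated multiplied out, so prefixes of probability zero
impose nothing. -/
structure IsSVSource (δ : ℝ) {n : ℕ} (p : (Fin n → Bool) → ℝ) : Prop where
  nonneg : ∀ x, 0 ≤ p x
  sum_eq_one : ∑ x, p x = 1
  bias : ∀ (i : Fin n) (x : Fin n → Bool),
    δ * mass p (fun y => ∀ j, j < i → y j = x j)
        ≤ mass p (fun y => (∀ j, j < i → y j = x j) ∧ y i = true) ∧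
      mass p (fun y => (∀ j, j < i → y j = x j) ∧ y i = true)
        ≤ (1 - δ) * mass p (fun y => ∀ j, j < i → y j = x j)

theorem isSVSource_fin_zero (δ : ℝ) : IsSVSource δ (fun _ : Fin 0 → Bool => 1) where
  nonneg _ := zero_le_one
  sum_eq_one := by simp
  bias i := i.elim0

section ConsMix

variable {n : ℕ}

def consMix (c : ℝ) (p : Bool → (Fin n → Bool) → ℝ) (x : Fin (n + 1) → Bool) : ℝ :=
  (if x 0 then c else 1 - c) * p (x 0) (Fin.tail x)

theorem sum_fin_succ_pi {β M : Type*} [Fintype β] [AddCommMonoid M] (f : (Fin (n + 1) → β) → M) :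
    ∑ x, f x = ∑ b, ∑ y, f (Fin.cons b y) := by
  rw [← (Fin.consEquiv fun _ => β).sum_comp f, Fintype.sum_prod_type]
  rfl

theorem mass_consMix (c : ℝ) (p : Bool → (Fin n → Bool) → ℝ)
    (S : (Fin (n + 1) → Bool) → Prop) [DecidablePred S] :
    mass (consMix c p) S = (1 - c) * mass (p false) (fun y => S (Fin.cons false y))
      + c * mass (p true) (fun y => S (Fin.cons true y)) := by
  simp only [mass, sum_fin_succ_pi, Fintype.sum_bool, mul_sum, consMix, Fin.cons_zero,
    Fin.tail_cons, mul_ite, mul_zero]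
  simp [add_comm]

theorem mass_consMix_head (c : ℝ) (p : Bool → (Fin n → Bool) → ℝ) (b : Bool)
    (T : (Fin n → Bool) → Prop) [DecidablePred T] :
    mass (consMix c p) (fun y => y 0 = b ∧ T (Fin.tail y))
      = (if b then c else 1 - c) * mass (p b) T := by
  cases b <;> simp [mass_consMix, mass_false]

theorem forall_lt_succ_eq_iff {β : Type*} {i : Fin n} {y x : Fin (n + 1) → β} :
    (∀ j, j < i.succ → y j = x j) ↔ y 0 = x 0 ∧ ∀ j, j < i → Fin.tail y j = Fin.tail x j := by
  simp [Fin.forall_fin_succ, Fin.succ_pos, Fin.succ_lt_succ_iff, Fin.tail]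

theorem isSVSource_consMix {δ c : ℝ} {p : Bool → (Fin n → Bool) → ℝ} (hδ : 0 ≤ δ)
    (hc : c ∈ Set.Icc δ (1 - δ)) (hp : ∀ b, IsSVSource δ (p b)) :
    IsSVSource δ (consMix c p) := by
  have hw (b : Bool) : 0 ≤ (if b then c else 1 - c) := by split <;> linarith [hc.1, hc.2]
  have hsum : ∑ x, consMix c p x = 1 := by
    rw [← mass_true, mass_consMix, mass_true, mass_true, (hp _).sum_eq_one, (hp _).sum_eq_one]
    ring
  refine ⟨fun x => mul_nonneg (hw _) ((hp _).nonneg _), hsum, fun i x => ?_⟩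
  induction i using Fin.cases with
  | zero =>
    have h_all : mass (consMix c p) (fun y => ∀ j, j < 0 → y j = x j) = 1 := by
      rw [mass_congr _ (T := fun _ => True) fun y => by simp, mass_true, hsum]
    have h_one : mass (consMix c p) (fun y => (∀ j, j < 0 → y j = x j) ∧ y 0 = true) = c := by
      calc _ = mass (consMix c p) (fun y => y 0 = true ∧ True) := mass_congr _ fun y => by simp
        _ = c := by
          rw [mass_consMix_head c p true fun _ => True, mass_true, (hp _).sum_eq_one, if_pos rfl,
            mul_one]
    rw [h_all, h_one, mul_one, mul_one]
    exact hc
  | succ i =>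
    have h_all : mass (consMix c p) (fun y => ∀ j, j < i.succ → y j = x j)
        = (if x 0 then c else 1 - c) *
          mass (p (x 0)) (fun y => ∀ j, j < i → y j = Fin.tail x j) := by
      rw [← mass_consMix_head]
      exact mass_congr _ fun y => forall_lt_succ_eq_iff
    have h_one : mass (consMix c p) (fun y => (∀ j, j < i.succ → y j = x j) ∧ y i.succ = true)
        = (if x 0 then c else 1 - c) *
          mass (p (x 0)) (fun y => (∀ j, j < i → y j = Fin.tail x j) ∧ y i = true) := by
      rw [← mass_consMix_head]
      exact mass_congr _ fun y => by rw [forall_lt_succ_eq_iff, and_assoc]; rfl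
    rw [h_all, h_one, mul_left_comm, mul_left_comm (1 - δ)]
    exact ⟨mul_le_mul_of_nonneg_left ((hp _).bias i _).1 (hw _),
      mul_le_mul_of_nonneg_left ((hp _).bias i _).2 (hw _)⟩

end ConsMix

theorem div_add_mem_Icc {δ a b : ℝ} (hδ : 0 < δ) (ha : a ∈ Set.Icc δ (1 - δ))
    (hb : b ∈ Set.Icc δ (1 - δ)) : a / (a + b) ∈ Set.Icc δ (1 - δ) := by
  obtain ⟨ha₁, ha₂⟩ := ha
  obtain ⟨hb₁, hb₂⟩ := hb
  have hab : 0 < a + b := by linarith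
  constructor
  · rw [le_div_iff₀ hab]; nlinarith
  · rw [div_le_iff₀ hab]; nlinarith

theorem exists_isSVSource_weighted_mass_le {δ : ℝ} (hδ₀ : 0 < δ) (hδ : δ ≤ 1 / 2) :
    ∀ {n : ℕ} (S : (Fin n → Bool) → Prop) [DecidablePred S],
      ∃ p q : (Fin n → Bool) → ℝ, ∃ c ∈ Set.Icc δ (1 - δ),
        IsSVSource δ p ∧ IsSVSource δ q ∧ c * mass p S + (1 - c) * mass q (fun x => ¬S x) ≤ δ
  | 0, S, _ => by
    have hmass : ∀ (T : (Fin 0 → Bool) → Prop) [DecidablePred T],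
        mass (fun _ => 1) T = if T default then 1 else 0 := fun T _ => Fintype.sum_subsingleton _ _
    refine ⟨_, _, if S default then δ else 1 - δ, ?_, isSVSource_fin_zero δ,
      isSVSource_fin_zero δ, ?_⟩
    · split <;> constructor <;> linarith
    · rw [hmass, hmass]
      split <;> simp_all
  | n + 1, S, _ => by
    obtain ⟨p₀, q₀, c₀, hc₀, hp₀, hq₀, h₀⟩ :=
      exists_isSVSource_weighted_mass_le hδ₀ hδ fun y => S (Fin.cons false y)
    obtain ⟨p₁, q₁, c₁, hc₁, hp₁, hq₁, h₁⟩ :=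
      exists_isSVSource_weighted_mass_le hδ₀ hδ fun y => S (Fin.cons true y)
    have one_sub_mem {c : ℝ} (hc : c ∈ Set.Icc δ (1 - δ)) : 1 - c ∈ Set.Icc δ (1 - δ) :=
      ⟨by linarith [hc.2], by linarith [hc.1]⟩
    have hpos₀ : 0 < c₁ + c₀ := by linarith [hc₀.1, hc₁.1]
    have hpos₁ : 0 < (1 - c₁) + (1 - c₀) := by linarith [hc₀.2, hc₁.2]
    refine ⟨consMix (c₁ / (c₁ + c₀)) (fun b => if b then p₁ else p₀),
      consMix ((1 - c₁) / ((1 - c₁) + (1 - c₀))) (fun b => if b then q₁ else q₀),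
      (c₀ + c₁) / 2, ⟨by linarith [hc₀.1, hc₁.1], by linarith [hc₀.2, hc₁.2]⟩,
      isSVSource_consMix hδ₀.le (div_add_mem_Icc hδ₀ hc₁ hc₀) (by simp [hp₀, hp₁]),
      isSVSource_consMix hδ₀.le (div_add_mem_Icc hδ₀ (one_sub_mem hc₁) (one_sub_mem hc₀))
        (by simp [hq₀, hq₁]), ?_⟩
    rw [mass_consMix, mass_consMix]
    simp only [Bool.false_eq_true, if_false, if_true]
    calc _ = (c₀ * mass p₀ (fun y => S (Fin.cons false y))
              + (1 - c₀) * mass q₀ (fun y => ¬S (Fin.cons false y))) / 2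
            + (c₁ * mass p₁ (fun y => S (Fin.cons true y))
              + (1 - c₁) * mass q₁ (fun y => ¬S (Fin.cons true y))) / 2 := by
          field_simp
          ring
      _ ≤ δ := by linarith

/-- Vadhan, Prop. 6.6: For any g : {0,1}^n → {0,1} and any
δ ∈ (0, 1/2), there is a δ-Santha–Vazirani source X on {0,1}^n (every
conditional bit probability lies in [δ, 1-δ], stated in the multiplied form
δ·Pr[prefix] ≤ Pr[prefix ∧ X_i = 1] ≤ (1-δ)·Pr[prefix]) such that either
Pr[g(X) = 1] ≥ 1 - δ or Pr[g(X) = 1] ≤ δ. -/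
theorem sv_source_biases_any_function (n : ℕ) (g : (Fin n → Bool) → Bool)
    (δ : ℝ) (hδ0 : 0 < δ) (hδ1 : δ < 1 / 2) :
    ∃ p : (Fin n → Bool) → ℝ,
      (∀ x, 0 ≤ p x) ∧ (∑ x, p x = 1) ∧
      (∀ i : Fin n, ∀ x : Fin n → Bool,
        δ * (∑ y, if (∀ j, j < i → y j = x j) then p y else 0)
            ≤ (∑ y, if (∀ j, j < i → y j = x j) ∧ y i = true then p y else 0)
          ∧
        (∑ y, if (∀ j, j < i → y j = x j) ∧ y i = true then p y else 0)
            ≤ (1 - δ) * (∑ y, if (∀ j, j < i → y j = x j) then p y else 0)) ∧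
      (1 - δ ≤ (∑ x, if g x then p x else 0)
        ∨ (∑ x, if g x then p x else 0) ≤ δ) := by
  obtain ⟨p, q, c, hc, hp, hq, hle⟩ :=
    exists_isSVSource_weighted_mass_le hδ0 hδ1.le fun x => g x = true
  by_cases hpg : mass p (fun x => g x = true) ≤ δ
  · exact ⟨p, hp.nonneg, hp.sum_eq_one, hp.bias, Or.inr hpg⟩
  · have hq_not : mass q (fun x => ¬g x = true) ≤ δ := by
      by_contra! hq_not
      have hc₀ : 0 < c := hδ0.trans_le hc.1
      have hc₁ : 0 < 1 - c := by linarith [hc.2]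
      nlinarith [mul_lt_mul_of_pos_left (not_le.1 hpg) hc₀, mul_lt_mul_of_pos_left hq_not hc₁]
    have hq_add := mass_add_mass_not q fun x => g x = true
    rw [hq.sum_eq_one] at hq_add
    refine ⟨q, hq.nonneg, hq.sum_eq_one, hq.bias, Or.inl ?_⟩
    change 1 - δ ≤ mass q _
    linarith
end
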